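/- One has the identity 1 + Σ_{A : ∅ ≠ A ⊆ N} (−1)^{|A|} exp(−u^A) = exp(−u^N) · Σ_{m=1}^{∞} (1/m!) Σ_{(C_1, …, C_m)} ∏_{i=1}^{m} v_{C_i}, where the inner sum ranges over all ordered m-tuples (C_1, …, C_m) of nonempty subsets of N with C_1 ∪ ⋯ ∪ C_m = N, and the series over m converges absolutely. -/

import Mathlib

/-!
Write `S A = ∑_{∅ ≠ C ⊆ A} v_C`. Möbius inversion of the defining relation of `v` gives
`S A = u^N - u^{N∖A}`. Inclusion–exclusion on the union of the blocks turns the sum over ordered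
covers `(C_1, …, C_m)` of `N` into `∑_A (-1)^{|N∖A|} (S A)^m`, so the series over `m` is a finite
combination of exponential series with sum `∑_A (-1)^{|N∖A|} exp (S A)`. Multiplying by
`exp (-u^N)` and substituting `B = N ∖ A` leaves `∑_B (-1)^{|B|} exp (-u^B)`, whose `B = ∅` term
is `1`.
-/

open Finset

section

variable {α R : Type*} [DecidableEq α] [CommRing R]

theorem sum_Icc_neg_one_pow_card_sdiff (s t : Finset α) :
    ∑ A ∈ Icc s t, (-1 : R) ^ #(t \ A) = if s = t then 1 else 0 := by
  by_cases hst : s ⊆ t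
  · have hreindex : ∑ A ∈ Icc s t, (-1 : R) ^ #(t \ A) = ∑ D ∈ (t \ s).powerset, (-1 : R) ^ #D :=
      sum_nbij' (t \ ·) (t \ ·) (fun A hA => by simp_all [sdiff_subset_sdiff])
        (fun D hD => by
          simp only [mem_powerset, subset_sdiff] at hD
          simp [subset_sdiff, hst, hD.2.symm])
        (fun A hA => Finset.sdiff_sdiff_eq_self (mem_Icc.mp hA).2)
        (fun D hD => Finset.sdiff_sdiff_eq_self ((mem_powerset.mp hD).trans sdiff_subset))
        (fun _ _ => rfl)
    have hpow := congrArg (Int.cast : ℤ → R) (sum_powerset_neg_one_pow_card (x := t \ s))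
    push_cast at hpow
    rw [hreindex, hpow]
    exact if_congr
      (sdiff_eq_empty_iff_subset.trans ⟨fun h => hst.antisymm h, fun h => h ▸ subset_rfl⟩) rfl rfl
  · rw [Icc_eq_empty hst, sum_empty, if_neg (fun h => hst h.subset)]

theorem sum_Icc_neg_one_pow_card (s t : Finset α) :
    ∑ C ∈ Icc s t, (-1 : R) ^ #C = if s = t then (-1) ^ #t else 0 := by
  have hsign : ∀ C ∈ Icc s t, (-1 : R) ^ #C = (-1) ^ #t * (-1) ^ #(t \ C) := fun C hC => by
    rw [← card_sdiff_add_card_eq_card (mem_Icc.mp hC).2, pow_add, mul_right_comm, ← pow_add,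
      Even.neg_one_pow ⟨_, rfl⟩, one_mul]
  rw [sum_congr rfl hsign, ← mul_sum, sum_Icc_neg_one_pow_card_sdiff, mul_ite, mul_one, mul_zero]

theorem sum_filter_eq_univ_eq_sum_neg_one_pow [Fintype α] {β : Type*} (s : Finset β)
    (g : β → Finset α) (F : β → R) :
    ∑ x ∈ s with g x = univ, F x = ∑ A, (-1 : R) ^ #Aᶜ * ∑ x ∈ s with g x ⊆ A, F x := by
  calc ∑ x ∈ s with g x = univ, F x
      = ∑ x ∈ s, (∑ A ∈ Icc (g x) univ, (-1 : R) ^ #Aᶜ) * F x := by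
        simp_rw [compl_eq_univ_sdiff, sum_Icc_neg_one_pow_card_sdiff, boole_mul, sum_ite,
          sum_const_zero, add_zero]
    _ = ∑ A, ∑ x ∈ s with g x ⊆ A, (-1 : R) ^ #Aᶜ * F x := by
        simp_rw [sum_mul]
        exact sum_comm' fun x A => by simp [and_comm]
    _ = _ := by simp_rw [mul_sum]

-- The decidability of `∀ i, f i ≠ ∅` is left abstract: for `ι = Fin m` the instance found is
-- `Nat.decidableForallFin`, not the one derived from `Fintype ι`.
theorem sum_prod_covers [Fintype α] {ι : Type*} [Fintype ι] [DecidableEq ι]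
    [DecidablePred fun f : ι → Finset α => ∀ i, f i ≠ ∅] (v : Finset α → R) :
    ∑ f ∈ (univ : Finset (ι → Finset α)).filter
        (fun f => (∀ i, f i ≠ ∅) ∧ univ.biUnion f = univ), ∏ i, v (f i)
      = ∑ A, (-1 : R) ^ #Aᶜ * (∑ C ∈ A.powerset.filter (· ≠ ∅), v C) ^ Fintype.card ι := by
  rw [← filter_filter, sum_filter_eq_univ_eq_sum_neg_one_pow]
  refine sum_congr rfl fun A _ => ?_
  have hcovers : ((univ : Finset (ι → Finset α)).filter (fun f => ∀ i, f i ≠ ∅)).filter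
      (fun f => univ.biUnion f ⊆ A) = Fintype.piFinset fun _ => A.powerset.filter (· ≠ ∅) := by
    ext f
    simp [forall_and, and_comm]
  rw [hcovers, ← prod_univ_sum, prod_const, card_univ]

theorem sum_nonempty_subset_eq_sub [Fintype α] {n : ℕ} (hcard : Fintype.card α = n)
    {u v : Finset α → R} (hu0 : u ∅ = 0)
    (hv : ∀ A : Finset α, A.Nonempty →
      v A = ∑ B ∈ univ.powerset.filter (fun B => univ \ A ⊆ B ∧ B ≠ ∅),
        (-1 : R) ^ (#A + #B + n + 1) * u B)
    (A : Finset α) :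
    ∑ C ∈ A.powerset.filter (· ≠ ∅), v C = u univ - u Aᶜ := by
  subst hcard
  -- The defining formula of `v`, also at `C = ∅`; dropping `B ≠ ∅` is harmless as `u ∅ = 0`.
  set w : Finset α → R :=
    fun C => ∑ B ∈ Icc Cᶜ univ, (-1 : R) ^ (#C + #B + Fintype.card α + 1) * u B
  have hvw : ∀ C ∈ A.powerset.filter (· ≠ ∅), v C = w C := fun C hC => by
    rw [hv C (nonempty_iff_ne_empty.mpr (mem_filter.mp hC).2), ← filter_filter,
      ← Icc_eq_filter_powerset, ← compl_eq_univ_sdiff]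
    refine sum_filter_of_ne fun B _ hB => ?_
    rintro rfl
    simp [hu0] at hB
  have hw_empty : w ∅ = -u univ := by
    simp [w, ← two_mul, pow_succ]
  have hsum_w : ∑ C ∈ A.powerset, w C = -u Aᶜ := by
    calc ∑ C ∈ A.powerset, w C
        = ∑ B, ∑ C ∈ Icc Bᶜ A, (-1 : R) ^ (#C + #B + Fintype.card α + 1) * u B := by
          refine sum_comm' fun C B => ?_
          simp only [mem_powerset, mem_Icc, subset_univ, and_true, mem_univ]
          rw [compl_le_iff_compl_le]
          exact and_comm
      _ = ∑ B, (-1 : R) ^ (#B + Fintype.card α + 1) * u B * ∑ C ∈ Icc Bᶜ A, (-1 : R) ^ #C := by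
          simp_rw [mul_sum]
          exact sum_congr rfl fun B _ => sum_congr rfl fun C _ => by ring
      _ = -u Aᶜ := by
          simp only [sum_Icc_neg_one_pow_card, compl_eq_comm, mul_ite, mul_zero, sum_ite_eq,
            mem_univ, if_true]
          rw [mul_right_comm, ← pow_add, ← card_compl_add_card A,
            show #Aᶜ + (#Aᶜ + #A) + 1 + #A = 2 * (#Aᶜ + #A) + 1 by ring, pow_succ, pow_mul]
          simp
  rw [sum_congr rfl hvw, filter_ne', sum_erase_eq_sub (f := w) (empty_mem_powerset A), hsum_w,
    hw_empty]
  ring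

theorem hasSum_sum_mul_pow_div_factorial {ι : Type*} (s : Finset ι) (c x : ι → ℝ) :
    HasSum (fun m => ∑ i ∈ s, c i * (x i ^ m / m.factorial)) (∑ i ∈ s, c i * Real.exp (x i)) :=
  hasSum_sum fun i _ =>
    (Real.exp_eq_exp_ℝ ▸ NormedSpace.expSeries_div_hasSum_exp (x i)).mul_left (c i)

theorem exp_neg_mul_sum_eq [Fintype α] {u : Finset α → ℝ} (hu0 : u ∅ = 0) :
    Real.exp (-u univ) * ∑ A, (-1 : ℝ) ^ #Aᶜ * Real.exp (u univ - u Aᶜ)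
      = 1 + ∑ A ∈ (univ : Finset α).powerset.filter (fun A => A ≠ ∅),
          (-1 : ℝ) ^ #A * Real.exp (-u A) := by
  have hterm : ∀ A : Finset α, Real.exp (-u univ) * ((-1 : ℝ) ^ #Aᶜ * Real.exp (u univ - u Aᶜ))
      = (-1 : ℝ) ^ #Aᶜ * Real.exp (-u Aᶜ) := fun A => by
    rw [mul_left_comm, ← Real.exp_add]; ring_nf
  rw [mul_sum, sum_congr rfl fun A _ => hterm A,
    Fintype.sum_equiv (compl_involutive.toPerm _) (fun A => (-1 : ℝ) ^ #Aᶜ * Real.exp (-u Aᶜ))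
      (fun B => (-1 : ℝ) ^ #B * Real.exp (-u B)) fun _ => rfl,
    filter_ne', powerset_univ, ← add_sum_erase _ _ (mem_univ ∅)]
  simp [hu0]

end

theorem martingale_expansion_general (n : ℕ)
    (u v : Finset (Fin n) → ℝ) (hu0 : u ∅ = 0)
    (hv : ∀ A : Finset (Fin n), A.Nonempty →
      v A = ∑ B ∈ Finset.univ.powerset.filter
          (fun B => Finset.univ \ A ⊆ B ∧ B ≠ ∅),
        (-1 : ℝ) ^ (A.card + B.card + n + 1) * u B)
    :
    Summable (fun m : ℕ =>
      |(1 / (m.factorial : ℝ)) *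
        ∑ f ∈ (Finset.univ : Finset (Fin m → Finset (Fin n))).filter
            (fun f => (∀ i, f i ≠ ∅) ∧ Finset.univ.biUnion f = Finset.univ),
          ∏ i, v (f i)|) ∧
    1 + ∑ A ∈ (Finset.univ : Finset (Fin n)).powerset.filter (fun A => A ≠ ∅),
        (-1 : ℝ) ^ A.card * Real.exp (-(u A))
      = Real.exp (-(u Finset.univ)) *
          ∑' m : ℕ, (1 / (m.factorial : ℝ)) *
            ∑ f ∈ (Finset.univ : Finset (Fin m → Finset (Fin n))).filter
                (fun f => (∀ i, f i ≠ ∅) ∧ Finset.univ.biUnion f = Finset.univ),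
              ∏ i, v (f i) := by
  have hterm : ∀ m : ℕ, (1 / (m.factorial : ℝ)) *
      ∑ f ∈ (univ : Finset (Fin m → Finset (Fin n))).filter
          (fun f => (∀ i, f i ≠ ∅) ∧ univ.biUnion f = univ), ∏ i, v (f i)
      = ∑ A, (-1 : ℝ) ^ #Aᶜ * ((u univ - u Aᶜ) ^ m / m.factorial) := fun m => by
    rw [sum_prod_covers, Fintype.card_fin, mul_sum]
    refine sum_congr rfl fun A _ => ?_
    rw [sum_nonempty_subset_eq_sub (Fintype.card_fin n) hu0 hv A]
    ring
  have hsum := hasSum_sum_mul_pow_div_factorial univ (fun A => (-1 : ℝ) ^ #Aᶜ)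
    (fun A => u univ - u Aᶜ)
  rw [← funext hterm] at hsum
  exact ⟨hsum.summable.abs, by rw [hsum.tsum_eq, exp_neg_mul_sum_eq hu0]⟩

/-- Lemma 4.3: `1 + Σ_{∅ ≠ A ⊆ N} (−1)^{|A|} exp(−u^A)
= exp(−u^N) Σ_{m ≥ 1} (1/m!) Σ_{C_1 ∪ ⋯ ∪ C_m = N, C_i ≠ ∅} ∏_i v_{C_i}`,
the series converging absolutely.  (The `m = 0` term of the series below vanishes
since `n ≥ 1`, so the sum over all `m : ℕ` coincides with the sum over `m ≥ 1`.) -/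
theorem martingale_expansion (n : ℕ) (hn : 1 ≤ n)
    (u v : Finset (Fin n) → ℝ) (hu0 : u ∅ = 0)
    (hv : ∀ A : Finset (Fin n), A.Nonempty →
      v A = ∑ B ∈ Finset.univ.powerset.filter
          (fun B => Finset.univ \ A ⊆ B ∧ B ≠ ∅),
        (-1 : ℝ) ^ (A.card + B.card + n + 1) * u B)
    :
    Summable (fun m : ℕ =>
      |(1 / (m.factorial : ℝ)) *
        ∑ f ∈ (Finset.univ : Finset (Fin m → Finset (Fin n))).filter
            (fun f => (∀ i, f i ≠ ∅) ∧ Finset.univ.biUnion f = Finset.univ),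
          ∏ i, v (f i)|) ∧
    1 + ∑ A ∈ (Finset.univ : Finset (Fin n)).powerset.filter (fun A => A ≠ ∅),
        (-1 : ℝ) ^ A.card * Real.exp (-(u A))
      = Real.exp (-(u Finset.univ)) *
          ∑' m : ℕ, (1 / (m.factorial : ℝ)) *
            ∑ f ∈ (Finset.univ : Finset (Fin m → Finset (Fin n))).filter
                (fun f => (∀ i, f i ≠ ∅) ∧ Finset.univ.biUnion f = Finset.univ),
              ∏ i, v (f i) :=
  martingale_expansion_general n u v hu0 hv
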